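/- arXiv:2507.12631 — 4 statements merged into one kernel-verified Lean document; each statement's English description precedes it below -/
import Mathlib

section
/- Let A be a set in the monster model of a complete theory T with distinguished unary predicate P, and suppose P is stably embedded with uniform definitions Ψ_ψ. If A is complete, then for every tuple ā ⊆ A and every formula ψ(x̄,ȳ), the ψ-type tp_ψ(ā / P ∩ A) is definable by Ψ_ψ(ȳ, c̄) for some c̄ ⊆ A ∩ P. -/
open FirstOrder FirstOrder.Language FirstOrder.Language.Structure Cardinal

universe u

namespace Gaifman

variable (L : FirstOrder.Language.{u, u}) {C : Type u} [L.Structure C]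

/-- The set of elements of the monster satisfying the unary predicate `P`. -/
def Pset (Pr : L.Relations 1) : Set C := {x | RelMap Pr ![x]}

/-- A set `A` is complete: every formula `(∃ x̄ ∈ P) ψ(x̄, b̄)` with `b̄ ⊆ A` that is
satisfied (with witnesses in `P`) has witnesses in `P ∩ A`. -/
def IsComplete (Pr : L.Relations 1) (A : Set C) : Prop :=
  ∀ (n m : ℕ) (ψ : L.Formula (Fin n ⊕ Fin m)) (b : Fin m → C),
    (∀ i, b i ∈ A) →
    (∃ a : Fin n → C, (∀ i, a i ∈ Pset L Pr) ∧ ψ.Realize (Sum.elim a b)) →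
    ∃ a : Fin n → C, (∀ i, a i ∈ Pset L Pr ∩ A) ∧ ψ.Realize (Sum.elim a b)

/-- `A ⊆_t B` : every formula with parameters in `A` satisfied by a tuple from `B`
is satisfied by a tuple from `A`. -/
def SubT (A B : Set C) : Prop :=
  ∀ (n m : ℕ) (ψ : L.Formula (Fin n ⊕ Fin m)) (a : Fin m → C) (b : Fin n → C),
    (∀ i, a i ∈ A) → (∀ i, b i ∈ B) → ψ.Realize (Sum.elim b a) →
    ∃ b' : Fin n → C, (∀ i, b' i ∈ A) ∧ ψ.Realize (Sum.elim b' a)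

/-- The type of the tuple `c` over the parameter set `A`, as a set of formulas with
parameters from `A`. -/
def TpSet (A : Set C) {k : ℕ} (c : Fin k → C) :
    Set (Σ m : ℕ, L.Formula (Fin k ⊕ Fin m) × (Fin m → C)) :=
  {x | (∀ i, x.2.2 i ∈ A) ∧ x.2.1.Realize (Sum.elim c x.2.2)}

/-- Two tuples have the same type over `A`. -/
def SameTpOver (A : Set C) {k : ℕ} (c c' : Fin k → C) : Prop :=
  ∀ (m : ℕ) (φ : L.Formula (Fin k ⊕ Fin m)) (b : Fin m → C), (∀ i, b i ∈ A) →
    (φ.Realize (Sum.elim c b) ↔ φ.Realize (Sum.elim c' b))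

/-- `tp(c/B) ∈ S_*(B)` : realizations add no new `P`-points and preserve completeness. -/
def InSStar (Pr : L.Relations 1) (B : Set C) {k : ℕ} (c : Fin k → C) : Prop :=
  Pset L Pr ∩ (B ∪ Set.range c) = Pset L Pr ∩ B ∧ IsComplete L Pr (B ∪ Set.range c)

/-- The type of `c` over `B` is locally isolated: for every formula `φ` there is a
formula `θ ∈ tp(c/B)` implying the `φ`-part of `tp(c/B)`. -/
def LocallyIsolatedTp (B : Set C) {k : ℕ} (c : Fin k → C) : Prop :=
  ∀ (m : ℕ) (φ : L.Formula (Fin k ⊕ Fin m)),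
    ∃ (m' : ℕ) (θ : L.Formula (Fin k ⊕ Fin m')) (a : Fin m' → C),
      (∀ i, a i ∈ B) ∧ θ.Realize (Sum.elim c a) ∧
      ∀ c' : Fin k → C, θ.Realize (Sum.elim c' a) →
        ∀ b : Fin m → C, (∀ i, b i ∈ B) →
          (φ.Realize (Sum.elim c b) → φ.Realize (Sum.elim c' b))

/-- The type of `c` over `B` is `λ`-isolated over `B₀ ⊆ B`: a subtype of size `< λ`
with parameters in `B₀` implies the whole type. -/
def LamIsolatedTpOver (lam : Cardinal.{u}) (B B₀ : Set C) {k : ℕ} (c : Fin k → C) : Prop :=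
  ∃ r ⊆ TpSet L B c, (∀ x ∈ r, ∀ i, x.2.2 i ∈ B₀) ∧ #r < lam ∧
    ∀ c' : Fin k → C, (∀ x ∈ r, x.2.1.Realize (Sum.elim c' x.2.2)) →
      ∀ x ∈ TpSet L B c, x.2.1.Realize (Sum.elim c' x.2.2)

/-- `D` is `λ`-compact: every type over parameters from `D` of size `< λ` which is
realized in the monster is realized in `D`. -/
def IsLamCompact (lam : Cardinal.{u}) (D : Set C) : Prop :=
  ∀ (k : ℕ) (p : Set (Σ m : ℕ, L.Formula (Fin k ⊕ Fin m) × (Fin m → C))),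
    (∀ x ∈ p, ∀ i, x.2.2 i ∈ D) → #p < lam →
    (∃ c : Fin k → C, ∀ x ∈ p, x.2.1.Realize (Sum.elim c x.2.2)) →
    ∃ c : Fin k → C, (∀ i, c i ∈ D) ∧ ∀ x ∈ p, x.2.1.Realize (Sum.elim c x.2.2)

/-- `B` is locally constructible over `A`: `B = A ∪ {d_i : i < α}` where each
`tp(d_i / A ∪ {d_j : j < i})` is locally isolated. -/
def LocallyConstructibleOver (A B : Set C) : Prop :=
  ∃ (ι : Type u) (r : ι → ι → Prop) (_ : IsWellOrder ι r) (d : ι → C),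
    B = A ∪ Set.range d ∧
    ∀ i : ι, LocallyIsolatedTp L (A ∪ d '' {j | r j i}) ![d i]

section Relational

variable (hf : ∀ n, IsEmpty (L.Functions n))

/-- In a relational language, any subset of the monster is (the carrier of) a
substructure. -/
def setSub (A : Set C) : L.Substructure C :=
  { carrier := A
    fun_mem := fun {n} f => (hf n).elim f }

/-- Truth of a formula at a tuple from `D`, computed in the induced structure on `D`. -/
def SetRealize (D : Set C) {α : Type*} (φ : L.Formula α) (v : α → C) : Prop :=
  ∃ hv : ∀ i, v i ∈ D, φ.Realize (M := ↥(setSub L hf D)) fun i => ⟨v i, hv i⟩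

/-- `D` is an elementary substructure of the induced structure on `E`. -/
def ElemPair (D E : Set C) : Prop :=
  D ⊆ E ∧ ∀ (n : ℕ) (φ : L.Formula (Fin n)) (v : Fin n → C), (∀ i, v i ∈ D) →
    (SetRealize L hf D φ v ↔ SetRealize L hf E φ v)

/-- `D` is an elementary substructure of the monster. -/
def ElemInC (D : Set C) : Prop :=
  ∀ (n : ℕ) (φ : L.Formula (Fin n)) (v : Fin n → C), (∀ i, v i ∈ D) →
    (SetRealize L hf D φ v ↔ φ.Realize v)

/-- Elementary equivalence of two sets, as induced substructures of the monster. -/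
def ElemEquivSets (A A' : Set C) : Prop :=
  L.completeTheory ↥(setSub L hf A) = L.completeTheory ↥(setSub L hf A')

/-- The collection `S_*(A)` of complete types over `A` weakly orthogonal to `P`,
represented by the sets of formulas of their realizations. -/
def SStar (Pr : L.Relations 1) (A : Set C) :
    Set (Σ k : ℕ, Set (Σ m : ℕ, L.Formula (Fin k ⊕ Fin m) × (Fin m → C))) :=
  {q | ∃ (k : ℕ) (c : Fin k → C), InSStar L Pr A c ∧ q = ⟨k, TpSet L A c⟩}

/-- `A` is stable over `P`: for every `A'` elementarily equivalent to `A` (as a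
substructure of the monster), `|S_*(A')| ≤ |A'| ^ |T|`. -/
def IsStable (Pr : L.Relations 1) (A : Set C) : Prop :=
  ∀ A' : Set C, ElemEquivSets L hf A A' → #(SStar L Pr A') ≤ #A' ^ (max L.card ℵ₀)

/-- `P` is "very stably embedded": the trace on `P` of any definable set is definable,
with parameters from `P`, *in the induced structure on `P`*. -/
def VeryStablyEmbedded (Pr : L.Relations 1) : Prop :=
  ∀ (n m : ℕ) (φ : L.Formula (Fin n ⊕ Fin m)) (b : Fin m → C),
    ∃ (m' : ℕ) (ψ : L.Formula (Fin n ⊕ Fin m')) (c : Fin m' → C), (∀ i, c i ∈ Pset L Pr) ∧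
      ∀ a : Fin n → C, (∀ i, a i ∈ Pset L Pr) →
        (φ.Realize (Sum.elim a b) ↔ SetRealize L hf (Pset L Pr) ψ (Sum.elim a c))

/-- Every model of `T` (i.e., elementary substructure of the monster) is stable over `P`. -/
def AllModelsStable (Pr : L.Relations 1) : Prop :=
  ∀ M : L.ElementarySubstructure C, IsStable L hf Pr ((M : L.Substructure C) : Set C)

end Relational

/-- `tp(c/B)` is definable over `D`: each `φ`-type has a definition with parameters in `D`. -/
def DefinableTpOver (B D : Set C) {k : ℕ} (c : Fin k → C) : Prop :=
  ∀ (m : ℕ) (φ : L.Formula (Fin k ⊕ Fin m)),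
    ∃ (m' : ℕ) (Ψ : L.Formula (Fin m ⊕ Fin m')) (d : Fin m' → C), (∀ i, d i ∈ D) ∧
      ∀ b : Fin m → C, (∀ i, b i ∈ B) →
        (φ.Realize (Sum.elim c b) ↔ Ψ.Realize (Sum.elim b d))

/-- `tp(e/B)` is the stationarization of `tp(c/A)` over `B`: for each formula `φ`, a
single definition with parameters in `A` defines both the `φ`-type of `c` over `A`
and the `φ`-type of `e` over `B`. -/
def IsStationarization (A B : Set C) {k : ℕ} (c e : Fin k → C) : Prop :=
  ∀ (m : ℕ) (φ : L.Formula (Fin k ⊕ Fin m)),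
    ∃ (m' : ℕ) (Ψ : L.Formula (Fin m ⊕ Fin m')) (a : Fin m' → C), (∀ i, a i ∈ A) ∧
      (∀ b : Fin m → C, (∀ i, b i ∈ A) →
        (φ.Realize (Sum.elim c b) ↔ Ψ.Realize (Sum.elim b a))) ∧
      (∀ b : Fin m → C, (∀ i, b i ∈ B) →
        (φ.Realize (Sum.elim e b) ↔ Ψ.Realize (Sum.elim b a)))

/-- `D ⫝_A B` : the type over `B` of every tuple from `D` is the stationarization of its
type over `A`. -/
def IndepOver (A B D : Set C) : Prop :=
  ∀ (k : ℕ) (c : Fin k → C), (∀ i, c i ∈ D) → IsStationarization L A B c c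


section Systems

variable (hf : ∀ n, IsEmpty (L.Functions n))

/-- The auxiliary language with a unary predicate for each index `s ∈ P(n)`,
used to view a system of sets as a single structure. -/
def sysLang : FirstOrder.Language.{0, 0} :=
  { Functions := fun _ => Empty
    Relations := fun n => match n with
      | 1 => Finset ℕ
      | _ => Empty }

/-- The structure on (the induced substructure on) `U` interpreting the predicate for
`s` as the set `A s`. -/
def sysStruc (A : Finset ℕ → Set C) (U : Set C) : sysLang.Structure ↥(setSub L hf U) where
  funMap := fun {n} f _ => Empty.elim f
  RelMap := fun {n} => match n with
    | 0 => fun r _ => Empty.elim r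
    | 1 => fun s x => (x 0 : C) ∈ A s
    | _ + 2 => fun r _ => Empty.elim r

/-- The union of the sets of a system. -/
def SysUnion (J : Set (Finset ℕ)) (A : Finset ℕ → Set C) : Set C := ⋃ s ∈ J, A s

/-- Truth of a formula of the expanded language (base language plus a predicate for each
index) in the system with sets `A s`, universe `U`, at a tuple `v` from `U`. -/
def SysRealize (A : Finset ℕ → Set C) (U : Set C) {α : Type*}
    (φ : (L.sum sysLang).Formula α) (v : α → C) : Prop :=
  ∃ hv : ∀ i, v i ∈ U,
    letI : sysLang.Structure ↥(setSub L hf U) := sysStruc L hf A U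
    φ.Realize (M := ↥(setSub L hf U)) fun i => ⟨v i, hv i⟩

/-- The system `⟨A s : s ∈ J⟩` is an elementary subsystem of `⟨A' s : s ∈ J⟩`
(both viewed as structures in the expanded language). -/
def SysElemSub (J : Set (Finset ℕ)) (A A' : Finset ℕ → Set C) : Prop :=
  (∀ s ∈ J, A s ⊆ A' s) ∧
  ∀ (n : ℕ) (φ : (L.sum sysLang).Formula (Fin n)) (v : Fin n → C),
    (∀ i, v i ∈ SysUnion J A) →
    (SysRealize L hf A (SysUnion J A) φ v ↔ SysRealize L hf A' (SysUnion J A') φ v)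

/-- The systems `⟨A s : s ∈ J⟩` and `⟨A' s : s ∈ J⟩` are elementarily equivalent
(as structures in the expanded language). -/
def SysElemEquiv (J : Set (Finset ℕ)) (A A' : Finset ℕ → Set C) : Prop :=
  ∀ φ : (L.sum sysLang).Formula (Fin 0),
    (SysRealize L hf A (SysUnion J A) φ finZeroElim ↔
      SysRealize L hf A' (SysUnion J A') φ finZeroElim)

end Systems

/-- Lexicographic order on finite sets of naturals via characteristic functions, with
position `0` most significant and `0 < 1`. -/
def lexLt (s t : Finset ℕ) : Prop := ∃ k, k ∈ t ∧ k ∉ s ∧ ∀ j < k, (j ∈ s ↔ j ∈ t)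

/-- `I` is a weakly nice index set for arity `n`: a hereditary subset of `P(n)`
containing all subsets of `{1, …, n-1}`. -/
def WeaklyNice (n : ℕ) (I : Set (Finset ℕ)) : Prop :=
  (∀ s ∈ I, s ⊆ Finset.range n) ∧
  (∀ s : Finset ℕ, s ⊆ Finset.range n → 0 ∉ s → s ∈ I) ∧
  (∀ s ∈ I, ∀ t ⊆ s, t ∈ I)

/-- `I` is nice: weakly nice and an initial segment of `P(n)` in lexicographic order. -/
def Nice (n : ℕ) (I : Set (Finset ℕ)) : Prop :=
  WeaklyNice n I ∧ ∀ s ∈ I, ∀ t ⊆ Finset.range n, lexLt t s → t ∈ I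

/-- `(I, s)` is nice: `I` is nice, `s` is the lexicographically last element of `I`,
and `0 ∈ s`. -/
def NicePair (n : ℕ) (I : Set (Finset ℕ)) (s : Finset ℕ) : Prop :=
  Nice n I ∧ s ∈ I ∧ 0 ∈ s ∧ ∀ t ∈ I, t ≠ s → lexLt t s

section GoodSys

variable (Pr : L.Relations 1) (hf : ∀ n, IsEmpty (L.Functions n))

/-- Clauses (ii)-(iv) of the definition of a good system (a weakly good presystem):
intersection condition; `A s ≺ P^C` for `0 ∉ s` and `A s ≺ C` for `0 ∈ s`; and
`A s ∩ P^C = A (s \ {0})`. -/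
def WG (I : Set (Finset ℕ)) (A : Finset ℕ → Set C) : Prop :=
  (∀ s ∈ I, ∀ t ∈ I, A s ∩ A t = A (s ∩ t)) ∧
  (∀ s ∈ I, 0 ∉ s → ElemPair L hf (A s) (Pset L Pr)) ∧
  (∀ s ∈ I, 0 ∈ s → ElemInC L hf (A s)) ∧
  (∀ s ∈ I, A s ∩ Pset L Pr = A (s.erase 0))

/-- Clause (vi): stability of the union over proper subsets of any `s ∈ I` with `0 ∈ s`. -/
def StabClause (I : Set (Finset ℕ)) (A : Finset ℕ → Set C) : Prop :=
  ∀ s ∈ I, 0 ∈ s → IsStable L hf Pr (⋃ t ∈ {t : Finset ℕ | t ⊂ s}, A t)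

/-- Clause (vii): witnesses may be moved into `A (s \ {m})`, keeping coordinates with
`m ∉ s` unchanged (`m = n - 1` is the last coordinate). -/
def WitnessClause (m : ℕ) (I : Set (Finset ℕ)) (A : Finset ℕ → Set C) : Prop :=
  ∀ (k : ℕ) (φ : L.Formula (Fin k)) (σ : Fin k → Finset ℕ) (b : Fin k → C),
    (∀ i, σ i ∈ I) → (∀ i, b i ∈ A (σ i)) → φ.Realize b →
    ∃ b' : Fin k → C, (∀ i, b' i ∈ A ((σ i).erase m)) ∧
      (∀ i, m ∉ σ i → b' i = b i) ∧ φ.Realize b'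

/-- `GS Pr hf n I A` : `⟨A s : s ∈ I⟩` is a good system for the (nice) index set
`I ⊆ P(n)`, by recursion on `n` (Definition 5.2 of the paper; clauses (i)-(viii)). -/
def GS : ℕ → Set (Finset ℕ) → (Finset ℕ → Set C) → Prop
  | 0, I, A => Nice 0 I ∧ WG L Pr hf I A ∧ StabClause L Pr hf I A
  | (m + 1), I, A =>
      Nice (m + 1) I ∧ WG L Pr hf I A ∧ StabClause L Pr hf I A ∧
      (∀ m', m = m' + 1 →
        SysElemSub L hf {s | s ⊆ Finset.Icc 1 m'} A (fun s => A (insert m s)) ∧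
        GS m {s | s ⊆ Finset.Icc 1 m'} A ∧
        GS m {s | s ⊆ Finset.Icc 1 m'} (fun s => A (insert m s))) ∧
      WitnessClause L m I A ∧
      GS m {s ∈ I | m ∉ s} A ∧
      GS m {s | m ∉ s ∧ insert m s ∈ I} (fun s => A (insert m s))

/-- Clause (v) of the definition of a good system, stated separately. -/
def Vclause (n : ℕ) (I : Set (Finset ℕ)) (A : Finset ℕ → Set C) : Prop :=
  ∀ m', n = m' + 2 →
    SysElemSub L hf {s | s ⊆ Finset.Icc 1 m'} A (fun s => A (insert (m' + 1) s)) ∧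
    GS L Pr hf (m' + 1) {s | s ⊆ Finset.Icc 1 m'} A ∧
    GS L Pr hf (m' + 1) {s | s ⊆ Finset.Icc 1 m'} (fun s => A (insert (m' + 1) s))

/-- A medium good system: clauses (ii)-(vi). -/
def MG (n : ℕ) (I : Set (Finset ℕ)) (A : Finset ℕ → Set C) : Prop :=
  WG L Pr hf I A ∧ Vclause L Pr hf n I A ∧ StabClause L Pr hf I A

/-- The index set `P⁻(n)` of all proper subsets of `{0, …, n-1}`. -/
def Pminus (n : ℕ) : Set (Finset ℕ) := {s | s ⊆ Finset.range n ∧ s ≠ Finset.range n}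

/-- `T` is `n`-stable over `P`: the union of every good `P⁻(n)`-system is stable. -/
def IsNStable (n : ℕ) : Prop :=
  ∀ A : Finset ℕ → Set C, GS L Pr hf n (Pminus n) A →
    IsStable L hf Pr (⋃ s ∈ Pminus n, A s)

end GoodSys



/-! By uniform stable embeddedness, the `ψ`-type of `ā` over `P` is defined by `Ψ_ψ(ȳ, c̄)` for
some `c̄ ⊆ P`. That `Ψ_ψ(ȳ, z̄)` defines the `ψ`-type of `ā` over `P` is a single first-order
formula `(∀ ȳ ∈ P) (ψ(ā, ȳ) ↔ Ψ_ψ(ȳ, z̄))` in `z̄` with parameters `ā ⊆ A`, so completeness of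
`A` moves the witness `c̄` into `P ∩ A`. -/

noncomputable def definesOnP (Pr : L.Relations 1) {K n m : ℕ}
    (ψ : L.Formula (Fin n ⊕ Fin m)) (Ψ : L.Formula (Fin m ⊕ Fin K)) :
    L.Formula (Fin K ⊕ Fin n) :=
  Formula.iAlls (Fin m)
    ((BoundedFormula.iInf fun i : Fin m => Pr.formula₁ (Term.var (Sum.inr i))).imp
      ((ψ.relabel (Sum.elim (Sum.inl ∘ Sum.inr) Sum.inr)).iff
        (Ψ.relabel (Sum.elim Sum.inr (Sum.inl ∘ Sum.inl)))))

theorem realize_definesOnP (Pr : L.Relations 1) {K n m : ℕ}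
    (ψ : L.Formula (Fin n ⊕ Fin m)) (Ψ : L.Formula (Fin m ⊕ Fin K))
    (c : Fin K → C) (a : Fin n → C) :
    (definesOnP L Pr ψ Ψ).Realize (Sum.elim c a) ↔
      ∀ d : Fin m → C, (∀ i, d i ∈ Pset L Pr) →
        (ψ.Realize (Sum.elim a d) ↔ Ψ.Realize (Sum.elim d c)) := by
  simp only [definesOnP, Formula.realize_iAlls]
  refine forall_congr' fun d => ?_
  rw [Formula.realize_imp, Formula.realize_iff, Formula.realize_relabel, Formula.realize_relabel,
    Formula.Realize, BoundedFormula.realize_iInf]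
  refine imp_congr (forall_congr' fun i => ?_) (iff_congr ?_ ?_)
  · exact Formula.realize_rel₁
  · congr! 1; ext (x | x) <;> rfl
  · congr! 1; ext (x | x) <;> rfl

variable {L} in
theorem IsComplete.exists_definition_mem_inter {Pr : L.Relations 1} {A : Set C}
    (hA : IsComplete L Pr A) {K n m : ℕ} {ψ : L.Formula (Fin n ⊕ Fin m)}
    {Ψ : L.Formula (Fin m ⊕ Fin K)} {a : Fin n → C} (ha : ∀ i, a i ∈ A)
    (hdef : ∃ c : Fin K → C, (∀ i, c i ∈ Pset L Pr) ∧
      ∀ d : Fin m → C, (∀ i, d i ∈ Pset L Pr) →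
        (ψ.Realize (Sum.elim a d) ↔ Ψ.Realize (Sum.elim d c))) :
    ∃ c : Fin K → C, (∀ i, c i ∈ Pset L Pr ∩ A) ∧
      ∀ d : Fin m → C, (∀ i, d i ∈ Pset L Pr) →
        (ψ.Realize (Sum.elim a d) ↔ Ψ.Realize (Sum.elim d c)) := by
  simp only [← realize_definesOnP] at hdef ⊢
  exact hA K n _ a ha hdef

/-- if `A` is complete then for every `ā ⊆ A` and every formula `ψ`,
the `ψ`-type of `ā` over `P ∩ A` is definable by `Ψ_ψ(ȳ, c̄)` with `c̄ ⊆ A ∩ P`. -/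
theorem statement_2 (Pr : L.Relations 1)
    (k : ∀ (n m : ℕ), L.Formula (Fin n ⊕ Fin m) → ℕ)
    (Ψ : ∀ (n m : ℕ) (ψ : L.Formula (Fin n ⊕ Fin m)), L.Formula (Fin m ⊕ Fin (k n m ψ)))
    (hSE : ∀ (n m : ℕ) (ψ : L.Formula (Fin n ⊕ Fin m)) (a : Fin n → C),
      ∃ c : Fin (k n m ψ) → C, (∀ i, c i ∈ Pset L Pr) ∧
        ∀ d : Fin m → C, (∀ i, d i ∈ Pset L Pr) →
          (ψ.Realize (Sum.elim a d) ↔ (Ψ n m ψ).Realize (Sum.elim d c)))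
    (A : Set C) (hA : IsComplete L Pr A)
    (n m : ℕ) (ψ : L.Formula (Fin n ⊕ Fin m)) (a : Fin n → C) (ha : ∀ i, a i ∈ A) :
    ∃ c : Fin (k n m ψ) → C, (∀ i, c i ∈ A ∩ Pset L Pr) ∧
      ∀ d : Fin m → C, (∀ i, d i ∈ Pset L Pr ∩ A) →
        (ψ.Realize (Sum.elim a d) ↔ (Ψ n m ψ).Realize (Sum.elim d c)) := by
  obtain ⟨c, hcPA, hc⟩ := hA.exists_definition_mem_inter ha (hSE n m ψ a)
  exact ⟨c, fun i => (hcPA i).symm, fun d hd => hc d fun i => (hd i).1⟩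

end Gaifman
end

section
/- Let B be a complete set in the monster model and p ∈ S(B) a locally isolated complete type. Then p ∈ S_*(B); that is, p is weakly orthogonal to P: for any realization c̄ of p, P ∩ (B ∪ c̄) = P ∩ B and B ∪ c̄ is complete. -/
open FirstOrder FirstOrder.Language FirstOrder.Language.Structure Cardinal

universe u

namespace Gaifman

variable (L : FirstOrder.Language.{u, u}) {C : Type u} [L.Structure C]

/-!
Let `ψ(x̄, c̄, d̄)`, with `d̄ ⊆ B`, have a solution in `P`. Local isolation gives
`θ(ȳ, ē) ∈ tp(c̄/B)` implying the `¬ψ(x̄, ȳ, d̄)`-part of `tp(c̄/B)`. Completeness of `B`, applied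
to `∃ ȳ (θ(ȳ, ē) ∧ ψ(x̄, ȳ, d̄))`, yields `ā ⊆ P ∩ B` and `c̄' ⊨ θ` with `ψ(ā, c̄', d̄)`; if
`¬ψ(ā, c̄, d̄)` held, `θ` would force `¬ψ(ā, c̄', d̄)`. So every formula over `B ∪ c̄` solvable in
`P` is solvable in `P ∩ B`: this gives completeness of `B ∪ c̄`, and, for `x = c_j`,
`P ∩ c̄ ⊆ B`.
-/

section LocalIsolation

variable {L}

theorem realize_relabel_sumMap {M : Type*} [L.Structure M] {γ α β : Type*}
    (φ : L.Formula (γ ⊕ α)) (σ : α → β) (a : γ → M) (b : β → M) :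
    (φ.relabel (Sum.map id σ)).Realize (Sum.elim a b) ↔ φ.Realize (Sum.elim a (b ∘ σ)) := by
  rw [Formula.realize_relabel, Sum.elim_comp_map, Function.comp_id]

theorem realize_relabel_sumMap_equiv {M : Type*} [L.Structure M] {γ α β : Type*}
    (φ : L.Formula (γ ⊕ α)) (e : α ≃ β) (a : γ → M) (b : α → M) :
    (φ.relabel (Sum.map id e)).Realize (Sum.elim a (b ∘ e.symm)) ↔ φ.Realize (Sum.elim a b) := by
  rw [realize_relabel_sumMap, Function.comp_assoc, e.symm_comp_self, Function.comp_id]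

theorem IsComplete.exists_mem_inter_of_finite {Pr : L.Relations 1} {B : Set C}
    (hB : IsComplete L Pr B) {n : ℕ} {β : Type*} [Finite β] (ψ : L.Formula (Fin n ⊕ β)) {b : β → C}
    (hb : ∀ i, b i ∈ B)
    (hex : ∃ a : Fin n → C, (∀ i, a i ∈ Pset L Pr) ∧ ψ.Realize (Sum.elim a b)) :
    ∃ a : Fin n → C, (∀ i, a i ∈ Pset L Pr ∩ B) ∧ ψ.Realize (Sum.elim a b) := by
  let e := Finite.equivFin β
  simp only [← realize_relabel_sumMap_equiv ψ e] at hex ⊢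
  exact hB _ _ _ _ (fun i => hb _) hex

theorem LocallyIsolatedTp.exists_isolating_of_finite {B : Set C} {k : ℕ} {c : Fin k → C}
    (h : LocallyIsolatedTp L B c) {β : Type*} [Finite β] (φ : L.Formula (Fin k ⊕ β)) :
    ∃ (m : ℕ) (θ : L.Formula (Fin k ⊕ Fin m)) (a : Fin m → C),
      (∀ i, a i ∈ B) ∧ θ.Realize (Sum.elim c a) ∧
      ∀ c' : Fin k → C, θ.Realize (Sum.elim c' a) →
        ∀ b : β → C, (∀ i, b i ∈ B) → φ.Realize (Sum.elim c b) → φ.Realize (Sum.elim c' b) := by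
  let e := Finite.equivFin β
  obtain ⟨m, θ, a, ha, hθ, himp⟩ := h _ (φ.relabel (Sum.map id e))
  refine ⟨m, θ, a, ha, hθ, fun c' hc' b hb => ?_⟩
  simpa only [realize_relabel_sumMap_equiv φ e] using himp c' hc' (b ∘ e.symm) fun i => hb _

theorem LocallyIsolatedTp.exists_witness_of_sumElim {Pr : L.Relations 1} {B : Set C}
    (hB : IsComplete L Pr B) {k : ℕ} {c : Fin k → C} (h : LocallyIsolatedTp L B c)
    {n : ℕ} {β : Type*} [Finite β] (ψ : L.Formula (Fin n ⊕ (Fin k ⊕ β))) {d : β → C}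
    (hd : ∀ i, d i ∈ B)
    (hex : ∃ a : Fin n → C, (∀ i, a i ∈ Pset L Pr) ∧ ψ.Realize (Sum.elim a (Sum.elim c d))) :
    ∃ a : Fin n → C, (∀ i, a i ∈ Pset L Pr ∩ B) ∧ ψ.Realize (Sum.elim a (Sum.elim c d)) := by
  obtain ⟨a₀, ha₀, hψ₀⟩ := hex
  let φ : L.Formula (Fin k ⊕ (Fin n ⊕ β)) :=
    (ψ.relabel (Sum.elim (Sum.inr ∘ Sum.inl) (Sum.elim Sum.inl (Sum.inr ∘ Sum.inr)))).not
  obtain ⟨m, θ, e, he, hθ, himp⟩ := h.exists_isolating_of_finite φ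
  let χ : L.Formula (Fin n ⊕ (Fin m ⊕ β)) := Formula.iExs (Fin k)
    (θ.relabel (Sum.elim Sum.inr (Sum.inl ∘ Sum.inr ∘ Sum.inl)) ⊓
      ψ.relabel (Sum.elim (Sum.inl ∘ Sum.inl) (Sum.elim Sum.inr (Sum.inl ∘ Sum.inr ∘ Sum.inr))))
  have hχ : ∀ a : Fin n → C, χ.Realize (Sum.elim a (Sum.elim e d)) ↔
      ∃ y : Fin k → C, θ.Realize (Sum.elim y e) ∧ ψ.Realize (Sum.elim a (Sum.elim y d)) := by
    intro a
    simp only [χ, Formula.realize_iExs, Formula.realize_inf, Formula.realize_relabel,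
      Sum.comp_elim, ← Function.comp_assoc, Sum.elim_comp_inl, Sum.elim_comp_inr]
  have hφ : ∀ (y : Fin k → C) (a : Fin n → C),
      φ.Realize (Sum.elim y (Sum.elim a d)) ↔ ¬ψ.Realize (Sum.elim a (Sum.elim y d)) := by
    intro y a
    simp only [φ, Formula.realize_not, Formula.realize_relabel,
      Sum.comp_elim, ← Function.comp_assoc, Sum.elim_comp_inl, Sum.elim_comp_inr]
  obtain ⟨a, ha, hχa⟩ := hB.exists_mem_inter_of_finite χ (b := Sum.elim e d)
    (Sum.forall.2 ⟨he, hd⟩) ⟨a₀, ha₀, (hχ a₀).2 ⟨c, hθ, hψ₀⟩⟩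
  obtain ⟨c', hθ', hψ'⟩ := (hχ a).1 hχa
  refine ⟨a, ha, by_contra fun hneg => ?_⟩
  exact (hφ c' a).1 (himp c' hθ' _ (Sum.forall.2 ⟨fun i => (ha i).2, hd⟩) ((hφ c a).2 hneg)) hψ'

theorem exists_sumElim_comp_eq {B : Set C} {k : ℕ} (c : Fin k → C) {α : Type*} {b : α → C}
    (hb : ∀ i, b i ∈ B ∪ Set.range c) :
    ∃ σ : α → Fin k ⊕ {i // b i ∈ B}, Sum.elim c (fun i : {i // b i ∈ B} => b i) ∘ σ = b := by
  classical
  refine ⟨fun i => if hi : b i ∈ B then .inr ⟨i, hi⟩ else .inl ((hb i).resolve_left hi).choose,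
    funext fun i => ?_⟩
  by_cases hi : b i ∈ B
  · simp [hi]
  · simpa [hi] using ((hb i).resolve_left hi).choose_spec

theorem LocallyIsolatedTp.exists_witness_of_mem_union {Pr : L.Relations 1} {B : Set C}
    (hB : IsComplete L Pr B) {k : ℕ} {c : Fin k → C} (h : LocallyIsolatedTp L B c)
    {n m : ℕ} (ψ : L.Formula (Fin n ⊕ Fin m)) {b : Fin m → C} (hb : ∀ i, b i ∈ B ∪ Set.range c)
    (hex : ∃ a : Fin n → C, (∀ i, a i ∈ Pset L Pr) ∧ ψ.Realize (Sum.elim a b)) :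
    ∃ a : Fin n → C, (∀ i, a i ∈ Pset L Pr ∩ B) ∧ ψ.Realize (Sum.elim a b) := by
  obtain ⟨σ, hσ⟩ := exists_sumElim_comp_eq c hb
  have hrel : ∀ a : Fin n → C, (ψ.relabel (Sum.map id σ)).Realize
      (Sum.elim a (Sum.elim c fun i : {i // b i ∈ B} => b i)) ↔ ψ.Realize (Sum.elim a b) :=
    fun a => by rw [realize_relabel_sumMap, hσ]
  simp only [← hrel] at hex ⊢
  exact h.exists_witness_of_sumElim hB _ (fun i => i.2) hex

end LocalIsolation

theorem statement_4 (Pr : L.Relations 1)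
    (B : Set C) (hB : IsComplete L Pr B) {k : ℕ} (c : Fin k → C)
    (h : LocallyIsolatedTp L B c) : InSStar L Pr B c := by
  refine ⟨subset_antisymm ?_ (Set.inter_subset_inter_right _ Set.subset_union_left), ?_⟩
  · rintro x ⟨hxP, hx⟩
    obtain ⟨a, ha, hax⟩ := h.exists_witness_of_mem_union hB (n := 1) (b := fun _ : Fin 1 => x)
      (Term.equal (Term.var (Sum.inl 0)) (Term.var (Sum.inr 0))) (fun _ => hx)
      ⟨fun _ => x, fun _ => hxP, by simp⟩
    have hax : a 0 = x := by simpa using hax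
    exact hax ▸ ha 0
  · intro n m ψ b hb hex
    obtain ⟨a, ha, hψ⟩ := h.exists_witness_of_mem_union hB ψ hb hex
    exact ⟨a, fun i => ⟨(ha i).1, Or.inl (ha i).2⟩, hψ⟩

end Gaifman
end

section
/- Let A be λ-saturated and stable, A ⊆_t B, and N a λ-saturated model that is λ-atomic over A with N ⫝_A B. Then tp(N/A) ⊢ tp(N/B); in particular tp(N/A) and tp(B/A) are weakly orthogonal. -/
open FirstOrder FirstOrder.Language FirstOrder.Language.Structure Cardinal

universe u

namespace Gaifman

variable (L : FirstOrder.Language.{u, u}) {C : Type u} [L.Structure C]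

/-!
By `N ⫝_A B`, the type of a tuple `d` from `N` over `B` is given by the definition, with
parameters in `A`, of its type over `A`. The point is that every realization `d'` of `tp(d/A)`
obeys this same definition over the whole monster: `tp(d/A)` is implied by a subtype of size
`< λ`, so a counterexample `(d', c)` would, by `λ`-saturation of `A`, be copied into `A`, where
the definition is correct. Hence `tp(d'/B)` is determined by `tp(d/A)`, and `tp(d'b'/A)` by
`tp(d/A)` and `tp(b/A)`.
-/

def IsLamAtomicOver (lam : Cardinal.{u}) (A N : Set C) : Prop :=
  ∀ (k : ℕ) (d : Fin k → C), (∀ i, d i ∈ N) →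
    ∃ B₀ ⊆ A, #B₀ < lam ∧ LamIsolatedTpOver L lam A B₀ d

section Transfer

variable {L}

lemma append_mem {S : Set C} {p q : ℕ} {u : Fin p → C} {v : Fin q → C}
    (hu : ∀ i, u i ∈ S) (hv : ∀ i, v i ∈ S) (i : Fin (p + q)) : Fin.append u v i ∈ S :=
  Fin.addCases (fun i => by simpa using hu i) (fun i => by simpa using hv i) i

lemma append_comp_castAdd {α : Type*} {p q : ℕ} (u : Fin p → α) (v : Fin q → α) :
    Fin.append u v ∘ Fin.castAdd q = u :=
  funext (Fin.append_left u v)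

lemma append_comp_natAdd {α : Type*} {p q : ℕ} (u : Fin p → α) (v : Fin q → α) :
    Fin.append u v ∘ Fin.natAdd p = v :=
  funext (Fin.append_right u v)

def conjWith {k l n : ℕ} (χ : L.Formula (Fin (k + l) ⊕ Fin n)) (e : Fin n → C)
    (x : Σ m : ℕ, L.Formula (Fin k ⊕ Fin m) × (Fin m → C)) :
    Σ m : ℕ, L.Formula (Fin (k + l) ⊕ Fin m) × (Fin m → C) :=
  ⟨x.1 + n,
    x.2.1.relabel (Sum.elim (Sum.inl ∘ Fin.castAdd l) (Sum.inr ∘ Fin.castAdd n)) ⊓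
      χ.relabel (Sum.elim Sum.inl (Sum.inr ∘ Fin.natAdd x.1)),
    Fin.append x.2.2 e⟩

lemma realize_conjWith {k l n : ℕ} (χ : L.Formula (Fin (k + l) ⊕ Fin n)) (e : Fin n → C)
    (x : Σ m : ℕ, L.Formula (Fin k ⊕ Fin m) × (Fin m → C)) (v : Fin (k + l) → C) :
    (conjWith χ e x).2.1.Realize (Sum.elim v (conjWith χ e x).2.2) ↔
      x.2.1.Realize (Sum.elim (v ∘ Fin.castAdd l) x.2.2) ∧ χ.Realize (Sum.elim v e) := by
  simp only [conjWith, Formula.realize_inf, Formula.realize_relabel, Sum.comp_elim,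
    ← Function.comp_assoc, Sum.elim_comp_inl, Sum.elim_comp_inr, append_comp_castAdd,
    append_comp_natAdd]

/-- Conjoining `χ` to each member of `p`, rather than adding it to `p`, keeps the size of the
type below `λ` also for finite `λ`. -/
lemma IsLamCompact.exists_realize_inf {lam : Cardinal.{u}} {D : Set C}
    (hD : IsLamCompact L lam D) {k l n : ℕ}
    {p : Set (Σ m : ℕ, L.Formula (Fin k ⊕ Fin m) × (Fin m → C))} (hp : p.Nonempty)
    (hpD : ∀ x ∈ p, ∀ i, x.2.2 i ∈ D) (hcard : #p < lam)
    (χ : L.Formula (Fin (k + l) ⊕ Fin n)) {e : Fin n → C} (he : ∀ i, e i ∈ D)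
    {v : Fin (k + l) → C} (hvp : ∀ x ∈ p, x.2.1.Realize (Sum.elim (v ∘ Fin.castAdd l) x.2.2))
    (hvχ : χ.Realize (Sum.elim v e)) :
    ∃ w : Fin (k + l) → C, (∀ i, w i ∈ D) ∧
      (∀ x ∈ p, x.2.1.Realize (Sum.elim (w ∘ Fin.castAdd l) x.2.2)) ∧
      χ.Realize (Sum.elim w e) := by
  obtain ⟨w, hwD, hw⟩ := hD (k + l) (conjWith χ e '' p)
    (by rintro _ ⟨x, hx, rfl⟩; exact append_mem (hpD x hx) he)
    (mk_image_le.trans_lt hcard)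
    ⟨v, by rintro _ ⟨x, hx, rfl⟩; exact (realize_conjWith χ e x v).2 ⟨hvp x hx, hvχ⟩⟩
  have hwp : ∀ x ∈ p, _ := fun x hx => (realize_conjWith χ e x w).1 (hw _ ⟨x, hx, rfl⟩)
  obtain ⟨x₀, hx₀⟩ := hp
  exact ⟨w, hwD, fun x hx => (hwp x hx).1, (hwp x₀ hx₀).2⟩

lemma LamIsolatedTpOver.exists_nonempty {lam : Cardinal.{u}} {A B₀ : Set C} {k : ℕ}
    {c : Fin k → C} (h : LamIsolatedTpOver L lam A B₀ c) (hlam : 1 < lam) :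
    ∃ r ⊆ TpSet L A c, r.Nonempty ∧ #r < lam ∧
      ∀ c' : Fin k → C, (∀ x ∈ r, x.2.1.Realize (Sum.elim c' x.2.2)) →
        ∀ x ∈ TpSet L A c, x.2.1.Realize (Sum.elim c' x.2.2) := by
  obtain ⟨r, hrA, -, hrcard, hrimp⟩ := h
  rcases r.eq_empty_or_nonempty with rfl | hr
  · refine ⟨{⟨0, ⊤, finZeroElim⟩}, ?_, Set.singleton_nonempty _, by rwa [mk_singleton], ?_⟩
    · rintro _ rfl
      exact ⟨finZeroElim, by simp⟩
    · exact fun c' _ => hrimp c' (by simp)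
  · exact ⟨r, hrA, hr, hrcard, hrimp⟩

/-- For `λ = 1` the isolating subtypes are empty, so all tuples share the type over `A` of a
point of `A`; the formula `x = a` then puts every point into `A`. -/
lemma IsLamAtomicOver.eq_univ_of_one {A N : Set C} (hN : IsLamAtomicOver L 1 A N)
    (hAN : A ⊆ N) (hA : IsLamCompact L 1 A) : A = Set.univ := by
  refine Set.eq_univ_of_forall fun x => ?_
  obtain ⟨a, ha, -⟩ := hA 1 ∅ (by simp) (by simp) ⟨![x], by simp⟩
  obtain ⟨-, -, -, r, -, -, hrcard, hrimp⟩ := hN 1 ![a 0] (fun i => by simpa using hAN (ha 0))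
  have hr : r = ∅ := by
    rwa [Cardinal.lt_one_iff, mk_eq_zero_iff, Set.isEmpty_coe_sort] at hrcard
  subst hr
  have hxa := hrimp ![x] (by simp)
    ⟨1, (Term.var (Sum.inl 0)).equal (Term.var (Sum.inr 0)), ![a 0]⟩ ⟨by simpa using ha 0, by simp⟩
  simp only [Formula.realize_equal, Term.realize_var, Sum.elim_inl, Sum.elim_inr,
    Matrix.cons_val_fin_one] at hxa
  exact hxa ▸ ha 0

/-- Otherwise `¬φ(d', c) ∧ Ψ(c, ā)` together with an isolating subtype of `tp(d/A)` is realized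
in `A`, by `(d'', c'')` say; then `d''` realizes `tp(d/A)` and `c'' ∈ A`, so `φ(d'', c'')` holds
after all. -/
theorem IsLamAtomicOver.realize_of_definition {lam : Cardinal.{u}} {A N : Set C}
    (hN : IsLamAtomicOver L lam A N) (hAN : A ⊆ N) (hA : IsLamCompact L lam A)
    {k m n : ℕ} {d d' : Fin k → C} (hd : ∀ i, d i ∈ N) (hdd' : SameTpOver L A d d')
    {φ : L.Formula (Fin k ⊕ Fin m)} {Ψ : L.Formula (Fin m ⊕ Fin n)} {a : Fin n → C}
    (ha : ∀ i, a i ∈ A)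
    (hdef : ∀ e : Fin m → C, (∀ i, e i ∈ A) →
      (φ.Realize (Sum.elim d e) ↔ Ψ.Realize (Sum.elim e a)))
    {c : Fin m → C} (hc : Ψ.Realize (Sum.elim c a)) : φ.Realize (Sum.elim d' c) := by
  obtain ⟨B₀, -, -, hiso⟩ := hN k d hd
  rcases le_or_gt lam 1 with hlam | hlam
  · obtain ⟨r, -, -, hrcard, -⟩ := hiso
    obtain rfl : lam = 1 := hlam.antisymm (Cardinal.one_le_iff_pos.2 (hrcard.trans_le' zero_le))
    have hcA : ∀ i, c i ∈ A := by simp [hN.eq_univ_of_one hAN hA]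
    exact (hdd' m φ c hcA).1 ((hdef c hcA).2 hc)
  by_contra hnφ
  obtain ⟨r, hrA, hrne, hrcard, hrimp⟩ := hiso.exists_nonempty hlam
  let χ : L.Formula (Fin (k + m) ⊕ Fin n) :=
    (φ.relabel (Sum.elim (Sum.inl ∘ Fin.castAdd m) (Sum.inl ∘ Fin.natAdd k))).not ⊓
      Ψ.relabel (Sum.elim (Sum.inl ∘ Fin.natAdd k) Sum.inr)
  have hχ : ∀ v, χ.Realize (Sum.elim v a) ↔
      ¬ φ.Realize (Sum.elim (v ∘ Fin.castAdd m) (v ∘ Fin.natAdd k)) ∧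
        Ψ.Realize (Sum.elim (v ∘ Fin.natAdd k) a) := by
    intro v
    simp only [χ, Formula.realize_inf, Formula.realize_not, Formula.realize_relabel,
      Sum.comp_elim, ← Function.comp_assoc, Sum.elim_comp_inl, Sum.elim_comp_inr]
  obtain ⟨w, hwA, hwr, hwχ⟩ := hA.exists_realize_inf hrne (fun x hx => (hrA hx).1) hrcard χ ha
    (v := Fin.append d' c)
    (by simpa only [append_comp_castAdd] using fun x hx => (hdd' _ _ _ (hrA hx).1).1 (hrA hx).2)
    ((hχ _).2 (by simpa only [append_comp_castAdd, append_comp_natAdd] using ⟨hnφ, hc⟩))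
  obtain ⟨hnot, hΨ⟩ := (hχ w).1 hwχ
  exact hnot (hrimp _ hwr ⟨m, φ, w ∘ Fin.natAdd k⟩ ⟨fun i => hwA _, (hdef _ fun i => hwA _).2 hΨ⟩)

lemma SameTpOver.append {A : Set C} {m j : ℕ} {b b' : Fin m → C} (h : SameTpOver L A b b')
    {a : Fin j → C} (ha : ∀ i, a i ∈ A) : SameTpOver L A (Fin.append b a) (Fin.append b' a) := by
  intro n Ψ e he
  have hregroup : ∀ b₀ : Fin m → C,
      (Ψ.relabel (Sum.elim (Fin.addCases Sum.inl (Sum.inr ∘ Fin.castAdd n))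
        (Sum.inr ∘ Fin.natAdd j))).Realize (Sum.elim b₀ (Fin.append a e)) ↔
        Ψ.Realize (Sum.elim (Fin.append b₀ a) e) := by
    intro b₀
    rw [Formula.realize_relabel]
    congr! 1
    funext z
    rcases z with i | i
    · induction i using Fin.addCases <;> simp
    · simp
  rw [← hregroup, ← hregroup]
  exact h _ _ _ (append_mem ha he)

lemma realize_relabel_assoc {α : Type*} {m j : ℕ} (φ : L.Formula ((α ⊕ Fin m) ⊕ Fin j))
    (d : α → C) (b : Fin m → C) (a : Fin j → C) :
    (φ.relabel (Sum.elim (Sum.elim Sum.inl (Sum.inr ∘ Fin.castAdd j))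
      (Sum.inr ∘ Fin.natAdd m))).Realize (Sum.elim d (Fin.append b a)) ↔
      φ.Realize (Sum.elim (Sum.elim d b) a) := by
  rw [Formula.realize_relabel]
  congr! 1
  funext z
  rcases z with (i | i) | i <;> simp

theorem IndepOver.sameTpOver {lam : Cardinal.{u}} {A B N : Set C} (hind : IndepOver L A B N)
    (hN : IsLamAtomicOver L lam A N) (hAN : A ⊆ N) (hA : IsLamCompact L lam A) {k : ℕ}
    {d d' : Fin k → C} (hd : ∀ i, d i ∈ N) (hdd' : SameTpOver L A d d') :
    SameTpOver L B d d' := by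
  have key : ∀ {m} (φ : L.Formula (Fin k ⊕ Fin m)) (b : Fin m → C), (∀ i, b i ∈ B) →
      φ.Realize (Sum.elim d b) → φ.Realize (Sum.elim d' b) := by
    intro m φ b hb hφ
    obtain ⟨n, Ψ, a, ha, hdefA, hdefB⟩ := hind k d hd m φ
    exact hN.realize_of_definition hAN hA hd hdd' ha hdefA ((hdefB b hb).1 hφ)
  exact fun m φ b hb => ⟨key φ b hb, fun h => by_contra fun hn => key φ.not b hb hn h⟩

/-- The definition `Ψ(ȳ, a')` of `tp(d/B)` has parameters in `A`, so whether it holds of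
`b ⁀ a` depends only on `tp(b/A)`. -/
theorem IndepOver.realize_of_sameTpOver {lam : Cardinal.{u}} {A B N : Set C}
    (hind : IndepOver L A B N) (hN : IsLamAtomicOver L lam A N) (hAN : A ⊆ N)
    (hA : IsLamCompact L lam A) (hAB : A ⊆ B) {k m j : ℕ} {d d' : Fin k → C}
    {b b' : Fin m → C} {a : Fin j → C} (hd : ∀ i, d i ∈ N) (hb : ∀ i, b i ∈ B)
    (ha : ∀ i, a i ∈ A) (hdd' : SameTpOver L A d d') (hbb' : SameTpOver L A b b')
    {φ : L.Formula ((Fin k ⊕ Fin m) ⊕ Fin j)} (hφ : φ.Realize (Sum.elim (Sum.elim d b) a)) :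
    φ.Realize (Sum.elim (Sum.elim d' b') a) := by
  obtain ⟨n, Ψ, a', ha', hdefA, hdefB⟩ := hind k d hd (m + j)
    (φ.relabel (Sum.elim (Sum.elim Sum.inl (Sum.inr ∘ Fin.castAdd j)) (Sum.inr ∘ Fin.natAdd m)))
  have hΨ : Ψ.Realize (Sum.elim (Fin.append b a) a') :=
    (hdefB _ (append_mem hb fun i => hAB (ha i))).1 ((realize_relabel_assoc φ d b a).2 hφ)
  have hΨ' : Ψ.Realize (Sum.elim (Fin.append b' a) a') := (hbb'.append ha n Ψ a' ha').1 hΨ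
  exact (realize_relabel_assoc φ d' b' a).1
    (hN.realize_of_definition hAN hA hd hdd' ha' hdefA hΨ')

end Transfer

theorem statement_12 (lam : Cardinal.{u}) (A B : Set C) (hsatA : IsLamCompact L lam A)
    (hAB : A ⊆ B) (N : L.ElementarySubstructure C) (hAN : A ⊆ ((N : L.Substructure C) : Set C))
    (hatomic : ∀ (k : ℕ) (d : Fin k → C), (∀ i, d i ∈ ((N : L.Substructure C) : Set C)) →
      ∃ B₀ ⊆ A, #B₀ < lam ∧ LamIsolatedTpOver L lam A B₀ d)
    (hind : IndepOver L A B ((N : L.Substructure C) : Set C)) :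
    (∀ (k : ℕ) (d d' : Fin k → C), (∀ i, d i ∈ ((N : L.Substructure C) : Set C)) →
      SameTpOver L A d d' → SameTpOver L B d d') ∧
    (∀ (k m : ℕ) (d : Fin k → C) (b : Fin m → C),
      (∀ i, d i ∈ ((N : L.Substructure C) : Set C)) → (∀ i, b i ∈ B) →
      ∀ (d' : Fin k → C) (b' : Fin m → C), SameTpOver L A d d' → SameTpOver L A b b' →
        ∀ (j : ℕ) (φ : L.Formula ((Fin k ⊕ Fin m) ⊕ Fin j)) (a : Fin j → C),
          (∀ i, a i ∈ A) →
          (φ.Realize (Sum.elim (Sum.elim d b) a) ↔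
            φ.Realize (Sum.elim (Sum.elim d' b') a))) := by
  refine ⟨fun k d d' hd hdd' => hind.sameTpOver hatomic hAN hsatA hd hdd', ?_⟩
  intro k m d b hd hb d' b' hdd' hbb' j φ a ha
  have transfer := fun ψ : L.Formula ((Fin k ⊕ Fin m) ⊕ Fin j) =>
    hind.realize_of_sameTpOver hatomic hAN hsatA hAB hd hb ha hdd' hbb' (φ := ψ)
  exact ⟨transfer φ, fun h => by_contra fun hn => transfer φ.not hn h⟩

end Gaifman
end

section
/- If ⟨A_s : s ∈ I⟩ is a good system and 0 = l_0 < l_1 < … < l_{m−1} < n_I, set J = { v ⊆ m : {l_i : i ∈ v} ∈ I } and B_v = A_{{l_i : i ∈ v}}. Then ⟨B_v : v ∈ J⟩ is a good system. -/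
open FirstOrder FirstOrder.Language FirstOrder.Language.Structure Cardinal

universe u

namespace Gaifman

variable (L : FirstOrder.Language.{u, u}) {C : Type u} [L.Structure C]

/-! Induction on `n`, following the recursive definition of good systems. If `l (m - 1) < n - 1`,
the restriction factors through the subsystem `{s ∈ I | n - 1 ∉ s}`. Otherwise `l` sends `m - 1`
to `n - 1`, and every clause transfers along `v ↦ l[v]`, which is injective, fixes `0` and
preserves inclusion and the lexicographic order: the induced subsystems of the restriction are
restrictions of the induced subsystems of `A`, and the elementarity of clause (v) is carried over
by translating formulas. -/

section Restrict

variable {L}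

lemma term_eq_var (hf : ∀ n, IsEmpty (L.Functions n)) {α : Type*}
    (t : (L.sum sysLang).Term α) : ∃ i, t = Term.var i := by
  rcases t with i | ⟨f | f, _⟩
  · exact ⟨i, rfl⟩
  · exact (hf _).elim f
  · exact f.elim

variable {hf : ∀ n, IsEmpty (L.Functions n)}

lemma coe_realize_term_eq {D U : Set C} [(L.sum sysLang).Structure ↥(setSub L hf D)]
    [(L.sum sysLang).Structure ↥(setSub L hf U)] {β : Type*} (t : (L.sum sysLang).Term β)
    (w : β → ↥(setSub L hf D)) (w' : β → ↥(setSub L hf U)) (hw : ∀ i, (w' i : C) = w i) :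
    ((t.realize w' : ↥(setSub L hf U)) : C) = t.realize w := by
  obtain ⟨i, rfl⟩ := term_eq_var hf t
  exact hw i

def sysLang.imageRel (l : ℕ → ℕ) : ∀ {k}, sysLang.Relations k → sysLang.Relations k
  | 1, t => Finset.image l t
  | 0, t => t
  | _ + 2, t => t

def imageRelSum (l : ℕ → ℕ) : ∀ {k}, (L.sum sysLang).Relations k → (L.sum sysLang).Relations k
  | _, .inl r => .inl r
  | _, .inr r => .inr (sysLang.imageRel l r)

def relativizeImage (l : ℕ → ℕ) (S : Finset ℕ) {α : Type*} :
    ∀ {d}, (L.sum sysLang).BoundedFormula α d → (L.sum sysLang).BoundedFormula α d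
  | _, .falsum => .falsum
  | _, .equal t₁ t₂ => .equal t₁ t₂
  | _, .rel R ts => .rel (imageRelSum l R) ts
  | _, .imp f g => .imp (relativizeImage l S f) (relativizeImage l S g)
  | d, .all f => .all ((Relations.boundedFormula₁ (Sum.inr S : (L.sum sysLang).Relations 1)
      (Term.var (Sum.inr (Fin.last d)))).imp (relativizeImage l S f))

lemma realize_relativizeImage (l : ℕ → ℕ) (A : Finset ℕ → Set C) {U : Set C} (S : Finset ℕ)
    (hSU : A S ⊆ U) {α : Type*} {d : ℕ} (φ : (L.sum sysLang).BoundedFormula α d)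
    (v : α → ↥(setSub L hf (A S))) (xs : Fin d → ↥(setSub L hf (A S)))
    (v' : α → ↥(setSub L hf U)) (xs' : Fin d → ↥(setSub L hf U))
    (hv : ∀ i, (v' i : C) = v i) (hxs : ∀ i, (xs' i : C) = xs i) :
    (letI := sysStruc L hf (fun t => A (t.image l)) (A S); φ.Realize v xs) ↔
      (letI := sysStruc L hf A U; (relativizeImage l S φ).Realize v' xs') := by
  let := sysStruc L hf (fun t => A (t.image l)) (A S)
  let := sysStruc L hf A U
  induction φ with
  | falsum => exact Iff.rfl
  | equal t₁ t₂ =>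
    have e := fun t =>
      coe_realize_term_eq (D := A S) (U := U) t (Sum.elim v xs) (Sum.elim v' xs') (Sum.rec hv hxs)
    show _ = _ ↔ _ = _
    rw [Subtype.ext_iff, Subtype.ext_iff, e t₁, e t₂]
  | @rel d k R ts =>
    have e := fun i =>
      coe_realize_term_eq (D := A S) (U := U) (ts i) (Sum.elim v xs) (Sum.elim v' xs')
        (Sum.rec hv hxs)
    rcases R with r | r
    · show RelMap r (fun i => (((ts i).realize (Sum.elim v xs) : ↥(setSub L hf (A S))) : C)) ↔
        RelMap r (fun i => (((ts i).realize (Sum.elim v' xs') : ↥(setSub L hf U)) : C))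
      rw [funext e]
    · match k, r with
      | 1, t =>
        show (((ts 0).realize (Sum.elim v xs) : ↥(setSub L hf (A S))) : C) ∈ A (t.image l) ↔
          (((ts 0).realize (Sum.elim v' xs') : ↥(setSub L hf U)) : C) ∈ A (t.image l)
        rw [e 0]
  | imp f g ihf ihg => exact imp_congr (ihf xs xs' hxs) (ihg xs xs' hxs)
  | @all d f ih =>
    have hsnoc : ∀ (a : ↥(setSub L hf (A S))) (a' : ↥(setSub L hf U)), (a' : C) = a →
        ∀ i, (Fin.snoc (α := fun _ => ↥(setSub L hf U)) xs' a' i : C) =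
          Fin.snoc (α := fun _ => ↥(setSub L hf (A S))) xs a i :=
      fun a a' ha i => Fin.lastCases (by simpa using ha) (fun j => by simpa using hxs j) i
    show (∀ _, _) ↔ (∀ _, _ → _)
    constructor
    · intro h b hb
      have hbS : (b : C) ∈ A S := by
        erw [BoundedFormula.realize_rel₁] at hb
        simp only [Term.realize_var, Sum.elim_inr, Fin.snoc_last] at hb
        exact hb
      exact (ih _ _ (hsnoc ⟨b, hbS⟩ b rfl)).1 (h ⟨b, hbS⟩)
    · intro h a
      refine (ih _ _ (hsnoc a ⟨a, hSU a.2⟩ rfl)).2 (h _ ?_)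
      erw [BoundedFormula.realize_rel₁]
      simp only [Term.realize_var, Sum.elim_inr, Fin.snoc_last]
      exact a.2

lemma sysRealize_relativizeImage (l : ℕ → ℕ) (A : Finset ℕ → Set C) {U : Set C} (S : Finset ℕ)
    (hSU : A S ⊆ U) {k : ℕ} (φ : (L.sum sysLang).Formula (Fin k)) (v : Fin k → C)
    (hv : ∀ i, v i ∈ A S) :
    SysRealize L hf (fun t => A (t.image l)) (A S) φ v ↔
      SysRealize L hf A U (relativizeImage l S φ) v :=
  ⟨fun ⟨_, h⟩ => ⟨fun i => hSU (hv i),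
      (realize_relativizeImage l A S hSU φ _ default _ default (fun _ => rfl) finZeroElim).1 h⟩,
    fun ⟨_, h⟩ => ⟨hv,
      (realize_relativizeImage l A S hSU φ _ default _ default (fun _ => rfl) finZeroElim).2 h⟩⟩

lemma subset_of_inter_eq {K : Set (Finset ℕ)} {A : Finset ℕ → Set C}
    (hint : ∀ s ∈ K, ∀ t ∈ K, A s ∩ A t = A (s ∩ t)) {s t : Finset ℕ}
    (hs : s ∈ K) (ht : t ∈ K) (hst : s ⊆ t) : A s ⊆ A t :=
  calc A s = A s ∩ A t := by rw [hint s hs t ht, Finset.inter_eq_left.mpr hst]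
    _ ⊆ A t := Set.inter_subset_right

lemma sysUnion_powerset {A : Finset ℕ → Set C} {u : Finset ℕ} (hmono : ∀ s ⊆ u, A s ⊆ A u) :
    SysUnion {s | s ⊆ u} A = A u :=
  (Set.iUnion₂_subset hmono).antisymm (Set.subset_biUnion_of_mem (u := A) (subset_refl u))

/-- The restricted systems have unions `A (l[V])` and `A' (l[V])`, so a formula about them
becomes one about the original systems once each predicate `v` is renamed to `l[v]` and the
quantifiers are relativized to the predicate `l[V]`. -/
lemma SysElemSub.image {U V : Finset ℕ} {A A' : Finset ℕ → Set C} {l : ℕ → ℕ}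
    (h : SysElemSub L hf {s | s ⊆ U} A A') (hVU : V.image l ⊆ U)
    (hint : ∀ s ∈ {s | s ⊆ U}, ∀ t ∈ {s | s ⊆ U}, A s ∩ A t = A (s ∩ t))
    (hint' : ∀ s ∈ {s | s ⊆ U}, ∀ t ∈ {s | s ⊆ U}, A' s ∩ A' t = A' (s ∩ t)) :
    SysElemSub L hf {v | v ⊆ V} (fun v => A (v.image l)) (fun v => A' (v.image l)) := by
  have unions : ∀ B : Finset ℕ → Set C,
      (∀ s ∈ {s | s ⊆ U}, ∀ t ∈ {s | s ⊆ U}, B s ∩ B t = B (s ∩ t)) →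
      SysUnion {v | v ⊆ V} (fun v => B (v.image l)) = B (V.image l) ∧
        SysUnion {s | s ⊆ U} B = B U ∧ B (V.image l) ⊆ B U := by
    intro B hB
    have hmono : ∀ s t : Finset ℕ, t ⊆ U → s ⊆ t → B s ⊆ B t :=
      fun s t ht hst => subset_of_inter_eq hB (hst.trans ht) ht hst
    exact ⟨sysUnion_powerset fun v hv => hmono _ _ hVU (Finset.image_subset_image hv),
      sysUnion_powerset fun s hs => hmono _ _ le_rfl hs, hmono _ _ le_rfl hVU⟩
  obtain ⟨hA, hAU, hAsub⟩ := unions A hint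
  obtain ⟨hA', hAU', hAsub'⟩ := unions A' hint'
  refine ⟨fun v hv => h.1 _ ((Finset.image_subset_image hv).trans hVU), fun k φ w hw => ?_⟩
  rw [hA] at hw
  rw [hA, hA', sysRealize_relativizeImage l A _ hAsub φ w hw,
    sysRealize_relativizeImage l A' _ hAsub' φ w fun i => h.1 _ hVU (hw i), ← hAU, ← hAU']
  exact h.2 k _ w fun i => hAU ▸ hAsub (hw i)


variable {Pr : L.Relations 1} {l : ℕ → ℕ}

def restrictIndex (l : ℕ → ℕ) (m : ℕ) (I : Set (Finset ℕ)) : Set (Finset ℕ) :=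
  {v | v ⊆ Finset.range m ∧ v.image l ∈ I}

lemma zero_mem_image_iff (hl : Function.Injective l) (h0 : l 0 = 0) {v : Finset ℕ} :
    0 ∈ v.image l ↔ 0 ∈ v := by
  simpa only [h0] using hl.mem_finset_image (s := v) (a := 0)

lemma lexLt_image (hl : StrictMono l) {s t : Finset ℕ} (h : lexLt s t) :
    lexLt (s.image l) (t.image l) := by
  obtain ⟨k, hkt, hks, hagree⟩ := h
  refine ⟨l k, Finset.mem_image_of_mem l hkt, by rwa [hl.injective.mem_finset_image], ?_⟩
  intro j hj
  simp only [Finset.mem_image]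
  constructor <;> rintro ⟨i, hi, rfl⟩ <;>
    exact ⟨i, by have := hagree i (hl.lt_iff_lt.1 hj); tauto, rfl⟩

lemma image_subset_range {m n : ℕ} (hlt : ∀ i < m, l i < n) {v : Finset ℕ}
    (hv : v ⊆ Finset.range m) : v.image l ⊆ Finset.range n :=
  Finset.image_subset_iff.2 fun i hi => Finset.mem_range.2 (hlt i (Finset.mem_range.1 (hv hi)))

lemma Nice.restrict {n m : ℕ} {I : Set (Finset ℕ)} (hI : Nice n I) (hl : StrictMono l)
    (h0 : l 0 = 0) (hlt : ∀ i < m, l i < n) : Nice m (restrictIndex l m I) := by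
  obtain ⟨⟨-, hbase, hhered⟩, hlex⟩ := hI
  refine ⟨⟨fun s hs => hs.1, fun s hs h0s => ⟨hs, ?_⟩, fun s hs t hts => ⟨hts.trans hs.1, ?_⟩⟩,
    fun s hs t ht hts => ⟨ht, ?_⟩⟩
  · exact hbase _ (image_subset_range hlt hs) (mt (zero_mem_image_iff hl.injective h0).1 h0s)
  · exact hhered _ hs.2 _ (Finset.image_subset_image hts)
  · exact hlex _ hs.2 _ (image_subset_range hlt ht) (lexLt_image hl hts)

lemma WG.restrict {m : ℕ} {I : Set (Finset ℕ)} {A : Finset ℕ → Set C}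
    (hA : WG L Pr hf I A) (hl : Function.Injective l) (h0 : l 0 = 0) :
    WG L Pr hf (restrictIndex l m I) (fun v => A (v.image l)) := by
  obtain ⟨hint, hP, hC, herase⟩ := hA
  refine ⟨fun s hs t ht => ?_, fun s hs h0s => hP _ hs.2 (mt (zero_mem_image_iff hl h0).1 h0s),
    fun s hs h0s => hC _ hs.2 ((zero_mem_image_iff hl h0).2 h0s), fun s hs => ?_⟩ <;> dsimp only
  · rw [Finset.image_inter s t hl]
    exact hint _ hs.2 _ ht.2
  · rw [Finset.image_erase hl, h0]
    exact herase _ hs.2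

lemma ssubset_image_eq_image (hl : Function.Injective l) (v : Finset ℕ) :
    {t | t ⊂ v.image l} = Finset.image l '' {w | w ⊂ v} := by
  ext t
  simp only [Set.mem_image]
  constructor
  · intro ht
    obtain ⟨w, hwv, rfl⟩ := Finset.subset_image_iff.1 ht.subset
    exact ⟨w, (Finset.image_ssubset_image hl).1 ht, rfl⟩
  · rintro ⟨w, hw, rfl⟩
    exact (Finset.image_ssubset_image hl).2 hw

lemma StabClause.restrict {m : ℕ} {I : Set (Finset ℕ)} {A : Finset ℕ → Set C}
    (hA : StabClause L Pr hf I A) (hl : Function.Injective l) (h0 : l 0 = 0) :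
    StabClause L Pr hf (restrictIndex l m I) (fun v => A (v.image l)) := by
  intro v hv h0v
  have h := hA _ hv.2 ((zero_mem_image_iff hl h0).2 h0v)
  rwa [ssubset_image_eq_image hl, Set.biUnion_image] at h

lemma WitnessClause.restrict {k m : ℕ} {I : Set (Finset ℕ)} {A : Finset ℕ → Set C}
    (hA : WitnessClause L (l k) I A) (hl : Function.Injective l) :
    WitnessClause L k (restrictIndex l m I) (fun v => A (v.image l)) := by
  intro j φ σ b hσ hb hφ
  obtain ⟨b', hb', hfix, hφ'⟩ := hA j φ (fun i => (σ i).image l) b (fun i => (hσ i).2) hb hφ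
  refine ⟨b', fun i => ?_, fun i hi => hfix i (by rwa [hl.mem_finset_image]), hφ'⟩
  dsimp only
  rw [Finset.image_erase hl]
  exact hb' i

lemma restrictIndex_sep_notMem {m k : ℕ} {I : Set (Finset ℕ)} (hk : ∀ i < m, l i ≠ k) :
    restrictIndex l m {s ∈ I | k ∉ s} = restrictIndex l m I := by
  ext v
  refine ⟨fun ⟨hv, hI, _⟩ => ⟨hv, hI⟩, fun ⟨hv, hI⟩ => ⟨hv, hI, fun hk' => ?_⟩⟩
  obtain ⟨i, hi, rfl⟩ := Finset.mem_image.1 hk'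
  exact hk i (Finset.mem_range.1 (hv hi)) rfl

lemma sep_notMem_restrictIndex_succ (hl : Function.Injective l) {m : ℕ} {I : Set (Finset ℕ)} :
    {s ∈ restrictIndex l (m + 1) I | m ∉ s} = restrictIndex l m {s ∈ I | l m ∉ s} := by
  ext v
  by_cases hm : m ∈ v
  · simp [restrictIndex, hm, hl.mem_finset_image]
  · simp [restrictIndex, hm, hl.mem_finset_image, Finset.range_add_one,
      Finset.subset_insert_iff_of_notMem hm]

lemma insert_mem_restrictIndex_succ (hl : Function.Injective l) {m : ℕ} {I : Set (Finset ℕ)} :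
    {s | m ∉ s ∧ insert m s ∈ restrictIndex l (m + 1) I} =
      restrictIndex l m {s | l m ∉ s ∧ insert (l m) s ∈ I} := by
  ext v
  by_cases hm : m ∈ v
  · simp [restrictIndex, hm, hl.mem_finset_image]
  · simp [restrictIndex, hm, hl.mem_finset_image, Finset.range_add_one,
      Finset.insert_subset_insert_iff hm]

lemma restrictIndex_powerset_Icc (hl : StrictMono l) (h0 : l 0 = 0) {m n : ℕ}
    (htop : l (m + 1) = n + 1) :
    restrictIndex l (m + 1) {s | s ⊆ Finset.Icc 1 n} = {s | s ⊆ Finset.Icc 1 m} := by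
  ext v
  show v ⊆ Finset.range (m + 1) ∧ v.image l ⊆ Finset.Icc 1 n ↔ v ⊆ Finset.Icc 1 m
  rw [Finset.image_subset_iff]
  simp only [Finset.subset_iff, ← forall₂_and, Finset.mem_range, Finset.mem_Icc]
  refine forall₂_congr fun i _ => ?_
  have e1 : 0 < i ↔ 0 < l i := by simpa only [h0] using (hl.lt_iff_lt (a := 0) (b := i)).symm
  have e2 : i < m + 1 ↔ l i < n + 1 := by rw [← htop]; exact hl.lt_iff_lt.symm
  omega

lemma GS.nice {n : ℕ} {I : Set (Finset ℕ)} {A : Finset ℕ → Set C} (h : GS L Pr hf n I A) :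
    Nice n I := by
  cases n <;> exact h.1

lemma GS.wg {n : ℕ} {I : Set (Finset ℕ)} {A : Finset ℕ → Set C} (h : GS L Pr hf n I A) :
    WG L Pr hf I A := by
  cases n <;> exact h.2.1

lemma GS.stabClause {n : ℕ} {I : Set (Finset ℕ)} {A : Finset ℕ → Set C}
    (h : GS L Pr hf n I A) : StabClause L Pr hf I A := by
  cases n
  · exact h.2.2
  · exact h.2.2.1

lemma GS.restrict_of_top {n m : ℕ} {I : Set (Finset ℕ)} {A : Finset ℕ → Set C}
    (hGS : GS L Pr hf (n + 1) I A) (hl : StrictMono l) (h0 : l 0 = 0) (htop : l m = n)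
    (IH : ∀ n' ≤ n, ∀ {I : Set (Finset ℕ)} {A : Finset ℕ → Set C} {m : ℕ},
      GS L Pr hf n' I A → (∀ i < m, l i < n') →
        GS L Pr hf m (restrictIndex l m I) (fun v => A (v.image l))) :
    GS L Pr hf (m + 1) (restrictIndex l (m + 1) I) (fun v => A (v.image l)) := by
  obtain ⟨hN, hWG, hStab, hV, hWit, hlow, hup⟩ := hGS
  have hlt : ∀ i < m, l i < n := fun i hi => htop ▸ hl hi
  have hinsert : ∀ s : Finset ℕ, (insert m s).image l = insert n (s.image l) := fun s => by
    rw [Finset.image_insert, htop]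
  refine ⟨hN.restrict hl h0 fun i hi => ?_, hWG.restrict hl.injective h0,
    hStab.restrict hl.injective h0, ?_, (htop ▸ hWit).restrict hl.injective, ?_, ?_⟩
  · exact Nat.lt_succ_of_le (htop ▸ hl.monotone (Nat.le_of_lt_succ hi))
  · rintro m' rfl
    obtain ⟨n', rfl⟩ : ∃ n', n = n' + 1 := ⟨n - 1, by have := hl (show 0 < m' + 1 by omega); omega⟩
    obtain ⟨hsub, hgA, hgA'⟩ := hV n' rfl
    have hidx := restrictIndex_powerset_Icc hl h0 htop
    have hlt' : ∀ i < m' + 1, l i < n' + 1 := htop ▸ hlt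
    simp only [hinsert]
    refine ⟨hsub.image ?_ hgA.wg.1 hgA'.wg.1, hidx ▸ IH _ le_rfl hgA hlt',
      hidx ▸ IH _ le_rfl hgA' hlt'⟩
    have hV : Finset.Icc 1 m' ∈ restrictIndex l (m' + 1) {s | s ⊆ Finset.Icc 1 n'} := by
      rw [hidx]
      exact Finset.Subset.refl _
    exact hV.2
  · rw [sep_notMem_restrictIndex_succ hl.injective, htop]
    exact IH n le_rfl hlow hlt
  · simp only [hinsert]
    rw [insert_mem_restrictIndex_succ hl.injective, htop]
    exact IH n le_rfl hup hlt

theorem GS.restrict {n m : ℕ} {I : Set (Finset ℕ)} {A : Finset ℕ → Set C}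
    (hGS : GS L Pr hf n I A) (hl : StrictMono l) (h0 : l 0 = 0) (hlt : ∀ i < m, l i < n) :
    GS L Pr hf m (restrictIndex l m I) (fun v => A (v.image l)) := by
  induction n using Nat.strong_induction_on generalizing I A m with
  | _ n IH =>
  cases m with
  | zero =>
    exact ⟨hGS.nice.restrict hl h0 hlt, hGS.wg.restrict hl.injective h0,
      hGS.stabClause.restrict hl.injective h0⟩
  | succ m =>
    obtain ⟨n, rfl⟩ : ∃ n', n = n' + 1 := ⟨n - 1, by have := hlt 0 m.succ_pos; omega⟩
    rcases Nat.lt_succ_iff_lt_or_eq.1 (hlt m m.lt_succ_self) with hlt' | htop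
    · have hlow : ∀ i < m + 1, l i < n :=
        fun i hi => (hl.monotone (Nat.le_of_lt_succ hi)).trans_lt hlt'
      rw [← restrictIndex_sep_notMem fun i hi => (hlow i hi).ne]
      exact IH n n.lt_succ_self hGS.2.2.2.2.2.1 hlow
    · exact hGS.restrict_of_top hl h0 htop
        fun n' hn' _ _ _ h hlt => IH n' (Nat.lt_succ_of_le hn') h hlt

end Restrict

theorem statement_14 (Pr : L.Relations 1) (hf : ∀ n, IsEmpty (L.Functions n))
    (n m : ℕ) (I : Set (Finset ℕ)) (A : Finset ℕ → Set C)
    (hGS : GS L Pr hf n I A)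
    (l : ℕ → ℕ) (hmono : StrictMono l) (h0 : l 0 = 0)
    (hlast : l (m - 1) < n) :
    GS L Pr hf m {v | v ⊆ Finset.range m ∧ Finset.image l v ∈ I}
      (fun v => A (Finset.image l v)) :=
  hGS.restrict hmono h0 fun i hi => (hmono.monotone (by omega)).trans_lt hlast

end Gaifman
end
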